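/- For all t > 0, integer n ≥ 3, and x ∈ [0,1], Σ_{j=0}^{n-1} e^{2λⱼⁿ t} ≥ (1 - e^{-2n²π²t})/√(32πt), where λⱼⁿ = -4n² sin²(jπ/n). Consequently ∫₀¹ (Gⁿ(t,κₙ(x),y))² dy ≥ (1 - e^{-2n²π²t})/√(32πt). -/

import Mathlib

/-!
Since `sin² θ ≤ θ²`, every term satisfies `e^{2λⱼⁿt} ≥ e^{-a j²}` with `a = 8π²t`. The sum of
this decreasing Gaussian over `j < n` dominates `∫₀ⁿ e^{-az²} dz`, which is the half-line integral
`√(π/a)/2 = 1/√(32πt)` minus a tail of at most `e^{-an²}/√(32πt) ≤ e^{-2n²π²t}/√(32πt)`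
(shift the tail to the origin and use `(z + n)² ≥ z² + n²`).

On the grid cell `(m/n, (m+1)/n)` the function `y ↦ Gⁿ(t, κₙ(x), y)` is constant, equal to
`Sₘ = ∑ⱼ e^{λⱼⁿt} ζ^{j(p-m)}` with `ζ = e^{2πi/n}` and `p = ⌊nx⌋`. Because `λₙ₋ⱼⁿ = λⱼⁿ`, each
`Sₘ` is real, and the discrete Parseval identity `∑ₘ |Sₘ|² = n ∑ⱼ e^{2λⱼⁿt}` shows that the
integral of `(Re Gⁿ)²` equals the sum bounded above.
-/

open Real MeasureTheory

/-- Left grid point `⌊ny⌋/n`. -/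
noncomputable def kappa (n : ℕ) (y : ℝ) : ℝ := (⌊(n : ℝ) * y⌋ : ℝ) / n

/-- `e_j(x) = e^{2πi j x}`. -/
noncomputable def efun (j : ℕ) (x : ℝ) : ℂ :=
  Complex.exp (2 * (π : ℂ) * Complex.I * (j : ℂ) * (x : ℂ))

/-- Piecewise-linear interpolation of `e_j` on the grid `{k/n}`. -/
noncomputable def efunInterp (n j : ℕ) (x : ℝ) : ℂ :=
  efun j (kappa n x) +
    (((n : ℝ) * x - (n : ℝ) * kappa n x : ℝ) : ℂ) *
      (efun j (kappa n x + 1 / n) - efun j (kappa n x))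

/-- Eigenvalues `λⱼⁿ = -4n² sin²(jπ/n)`. -/
noncomputable def lamn (n j : ℕ) : ℝ := -4 * (n : ℝ) ^ 2 * Real.sin ((j : ℝ) * π / n) ^ 2

/-- The semi-discrete Green function
`Gⁿ(t,x,y) = ∑_{j=0}^{n-1} e^{λⱼⁿ t} eⱼⁿ(x) ēⱼ(κₙ(y))`. -/
noncomputable def Gsemi (n : ℕ) (t x y : ℝ) : ℂ :=
  ∑ j ∈ Finset.range n,
    (Real.exp (lamn n j * t) : ℂ) * efunInterp n j x * (starRingEnd ℂ) (efun j (kappa n y))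

open Finset Set ComplexConjugate

lemma integral_Ioi_exp_neg_mul_sq_le {a : ℝ} (ha : 0 < a) {M : ℝ} (hM : 0 ≤ M) :
    ∫ x in Ioi M, rexp (-a * x ^ 2) ≤ rexp (-a * M ^ 2) * (√(π / a) / 2) := by
  have hint : Integrable (fun x : ℝ => rexp (-a * x ^ 2)) := integrable_exp_neg_mul_sq ha
  have hshift : ∫ x in Ioi M, rexp (-a * x ^ 2) = ∫ x in Ioi 0, rexp (-a * (x + M) ^ 2) := by
    rw [← (measurePreserving_add_right volume M).setIntegral_preimage_emb
      (measurableEmbedding_addRight M)]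
    simp
  rw [hshift, ← integral_gaussian_Ioi, ← integral_const_mul]
  refine setIntegral_mono_on (hint.comp_add_right M).integrableOn (hint.const_mul _).integrableOn
    measurableSet_Ioi fun x (hx : 0 < x) => ?_
  rw [← Real.exp_add]
  exact Real.exp_le_exp.2 (by nlinarith [mul_nonneg hx.le hM])

lemma one_sub_exp_mul_le_integral_exp_neg_mul_sq {a : ℝ} (ha : 0 < a) {M : ℝ} (hM : 0 ≤ M) :
    (1 - rexp (-a * M ^ 2)) * (√(π / a) / 2) ≤ ∫ x in (0)..M, rexp (-a * x ^ 2) := by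
  have hint : Integrable (fun x : ℝ => rexp (-a * x ^ 2)) := integrable_exp_neg_mul_sq ha
  have hsplit : (∫ x in Ioc 0 M, rexp (-a * x ^ 2)) + ∫ x in Ioi M, rexp (-a * x ^ 2) =
      √(π / a) / 2 := by
    rw [← integral_gaussian_Ioi, ← setIntegral_union (Ioc_disjoint_Ioi le_rfl) measurableSet_Ioi
      hint.integrableOn hint.integrableOn, Ioc_union_Ioi_eq_Ioi hM]
  rw [intervalIntegral.integral_of_le hM]
  linarith [integral_Ioi_exp_neg_mul_sq_le ha hM]

lemma integral_exp_neg_mul_sq_le_sum {a : ℝ} (ha : 0 ≤ a) (k : ℕ) :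
    ∫ x in (0)..(k : ℝ), rexp (-a * x ^ 2) ≤ ∑ j ∈ range k, rexp (-a * (j : ℝ) ^ 2) := by
  have hanti : AntitoneOn (fun x : ℝ => rexp (-a * x ^ 2)) (Icc 0 (0 + k)) :=
    fun u hu v _ huv => Real.exp_le_exp.2 <| by
      nlinarith [mul_le_mul_of_nonneg_left (pow_le_pow_left₀ hu.1 huv 2) ha]
  simpa using hanti.integral_le_sum

lemma neg_four_mul_pi_sq_mul_sq_le_lamn (n j : ℕ) : -4 * π ^ 2 * (j : ℝ) ^ 2 ≤ lamn n j := by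
  rcases Nat.eq_zero_or_pos n with rfl | hn
  · have h0 : lamn 0 j = 0 := by simp [lamn]
    nlinarith [sq_nonneg (π * j)]
  have hsin := Real.sin_sq_le_sq (x := (j : ℝ) * π / n)
  have : (n : ℝ) ^ 2 * ((j : ℝ) * π / n) ^ 2 = π ^ 2 * (j : ℝ) ^ 2 := by field_simp
  rw [lamn]
  nlinarith [mul_le_mul_of_nonneg_left hsin (sq_nonneg (n : ℝ))]

lemma one_sub_exp_div_sqrt_le_sum_exp_lamn (n : ℕ) {t : ℝ} (ht : 0 < t) :
    (1 - rexp (-2 * (n : ℝ) ^ 2 * π ^ 2 * t)) / √(32 * π * t) ≤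
      ∑ j ∈ range n, rexp (2 * lamn n j * t) := by
  set a : ℝ := 8 * π ^ 2 * t with ha_def
  have ha : 0 < a := by positivity
  have hconst : 1 / √(32 * π * t) = √(π / a) / 2 := by
    rw [show π / a = (8 * π * t)⁻¹ by rw [ha_def]; field_simp, Real.sqrt_inv,
      show (32 : ℝ) * π * t = 2 ^ 2 * (8 * π * t) by ring, Real.sqrt_mul (by norm_num),
      Real.sqrt_sq (by norm_num)]
    field_simp
  calc (1 - rexp (-2 * (n : ℝ) ^ 2 * π ^ 2 * t)) / √(32 * π * t)
      = (1 - rexp (-a * ((n : ℝ) / 2) ^ 2)) * (√(π / a) / 2) := by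
        rw [← hconst, ha_def]; ring_nf
    _ ≤ (1 - rexp (-a * (n : ℝ) ^ 2)) * (√(π / a) / 2) := by
        have : rexp (-a * (n : ℝ) ^ 2) ≤ rexp (-a * ((n : ℝ) / 2) ^ 2) :=
          Real.exp_le_exp.2 (by nlinarith [sq_nonneg (n : ℝ)])
        gcongr
    _ ≤ ∫ x in (0)..(n : ℝ), rexp (-a * x ^ 2) :=
        one_sub_exp_mul_le_integral_exp_neg_mul_sq ha n.cast_nonneg
    _ ≤ ∑ j ∈ range n, rexp (-a * (j : ℝ) ^ 2) := integral_exp_neg_mul_sq_le_sum ha.le n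
    _ ≤ ∑ j ∈ range n, rexp (2 * lamn n j * t) := by
        refine sum_le_sum fun j _ => Real.exp_le_exp.2 ?_
        nlinarith [neg_four_mul_pi_sq_mul_sq_le_lamn n j]

lemma IsPrimitiveRoot.sum_pow_mul_inv_pow {K : Type*} [Field K] {ζ : K} {n : ℕ}
    (hζ : IsPrimitiveRoot ζ n) {j k : ℕ} (hj : j < n) (hk : k < n) :
    ∑ m ∈ range n, ζ ^ (j * m) * (ζ ^ (k * m))⁻¹ = if j = k then (n : K) else 0 := by
  have hζ0 : ζ ≠ 0 := hζ.ne_zero (by omega)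
  have hterm : ∀ m, ζ ^ (j * m) * (ζ ^ (k * m))⁻¹ = (ζ ^ j * (ζ ^ k)⁻¹) ^ m := fun m => by
    rw [mul_pow, inv_pow, ← pow_mul, ← pow_mul]
  simp_rw [hterm]
  split_ifs with hjk
  · simp [hjk, hζ0]
  have hw : ζ ^ j * (ζ ^ k)⁻¹ ≠ 1 := fun h =>
    hjk (hζ.pow_inj hj hk (mul_inv_eq_one₀ (pow_ne_zero _ hζ0) |>.1 h))
  have hwn : (ζ ^ j * (ζ ^ k)⁻¹) ^ n = 1 := by
    rw [mul_pow, inv_pow, ← pow_mul, ← pow_mul, mul_comm j, mul_comm k, pow_mul, pow_mul,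
      hζ.pow_eq_one, one_pow, one_pow, inv_one, mul_one]
  rw [geom_sum_eq hw, hwn, sub_self, zero_div]

lemma IsPrimitiveRoot.sum_normSq_sum_mul_pow {ζ : ℂ} {n : ℕ} (hζ : IsPrimitiveRoot ζ n)
    (a : ℕ → ℂ) :
    ∑ m ∈ range n, Complex.normSq (∑ j ∈ range n, a j * ζ ^ (j * m)) =
      n * ∑ j ∈ range n, Complex.normSq (a j) := by
  rcases Nat.eq_zero_or_pos n with rfl | hn
  · simp
  have hconj : ∀ l, conj (ζ ^ l) = (ζ ^ l)⁻¹ := fun l =>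
    (Complex.inv_eq_conj (by rw [norm_pow, hζ.norm'_eq_one hn.ne', one_pow])).symm
  apply Complex.ofReal_injective
  push_cast
  simp_rw [← Complex.mul_conj, map_sum, map_mul, hconj, sum_mul_sum, mul_sum]
  rw [sum_comm]
  refine sum_congr rfl fun j hj => ?_
  rw [sum_comm]
  have hj' := mem_range.1 hj
  simp_rw [show ∀ k m, a j * ζ ^ (j * m) * (conj (a k) * (ζ ^ (k * m))⁻¹) =
      a j * conj (a k) * (ζ ^ (j * m) * (ζ ^ (k * m))⁻¹) from fun _ _ => by ring, ← mul_sum]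
  rw [sum_congr rfl fun k hk => by rw [hζ.sum_pow_mul_inv_pow hj' (mem_range.1 hk)]]
  simp only [mul_ite, mul_zero, sum_ite_eq, hj, if_true]
  ring

lemma conj_sum_mul_zpow_of_reflect {ζ : ℂ} {n : ℕ} (hζ : IsPrimitiveRoot ζ n) (c : ℕ → ℝ)
    (hc : ∀ j ≤ n, c (n - j) = c j) (d : ℤ) :
    conj (∑ j ∈ range n, (c j : ℂ) * ζ ^ ((j : ℤ) * d)) =
      ∑ j ∈ range n, (c j : ℂ) * ζ ^ ((j : ℤ) * d) := by
  rcases Nat.eq_zero_or_pos n with rfl | hn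
  · simp
  set g : ℕ → ℂ := fun j => (c j : ℂ) * ζ ^ ((j : ℤ) * d)
  have hζ0 : ζ ≠ 0 := hζ.ne_zero hn.ne'
  have hconj : conj ζ = ζ⁻¹ := (Complex.inv_eq_conj (hζ.norm'_eq_one hn.ne')).symm
  have hreflect : ∀ j ≤ n, conj (g j) = g (n - j) := fun j hj => by
    simp only [g, map_mul, Complex.conj_ofReal, map_zpow₀, hconj, hc j hj, Nat.cast_sub hj,
      sub_mul, zpow_sub₀ hζ0, zpow_mul ζ n, zpow_natCast, hζ.pow_eq_one, one_zpow, inv_zpow,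
      one_div]
  have hperiodic : g n = g 0 := by simpa [g] using (hreflect 0 n.zero_le).symm
  calc conj (∑ j ∈ range n, g j) = ∑ j ∈ range n, g (n - 1 - j + 1) := by
        refine (map_sum _ _ _).trans (sum_congr rfl fun j hj => ?_)
        have := mem_range.1 hj
        rw [hreflect j (by omega), show n - j = n - 1 - j + 1 by omega]
    _ = ∑ j ∈ range n, g j := by
        rw [sum_range_reflect (fun j => g (j + 1)) n]
        obtain ⟨k, rfl⟩ : ∃ k, n = k + 1 := ⟨n - 1, by omega⟩
        rw [sum_range_succ, sum_range_succ' g, hperiodic, add_comm]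

lemma lamn_sub {n j : ℕ} (hj : j ≤ n) : lamn n (n - j) = lamn n j := by
  rcases Nat.eq_zero_or_pos n with rfl | hn
  · rw [Nat.le_zero.1 hj]
  have : ((n - j : ℕ) : ℝ) * π / n = π - j * π / n := by
    rw [Nat.cast_sub hj]; field_simp
  rw [lamn, lamn, this, Real.sin_pi_sub]

lemma kappa_kappa (n : ℕ) (x : ℝ) : kappa n (kappa n x) = kappa n x := by
  rcases Nat.eq_zero_or_pos n with rfl | hn
  · simp [kappa]
  rw [kappa, kappa, mul_div_cancel₀ _ (Nat.cast_ne_zero.2 hn.ne'), Int.floor_intCast]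

lemma efunInterp_kappa (n j : ℕ) (x : ℝ) : efunInterp n j (kappa n x) = efun j (kappa n x) := by
  simp [efunInterp, kappa_kappa]

lemma kappa_eq_of_mem_Ioo {n m : ℕ} (hn : 0 < n) {y : ℝ} (hy : y ∈ Ioo (m / n : ℝ) ((m + 1) / n)) :
    kappa n y = m / n := by
  have hn' : (0 : ℝ) < n := Nat.cast_pos.2 hn
  rw [Set.mem_Ioo, div_lt_iff₀ hn', lt_div_iff₀ hn'] at hy
  have : ⌊(n : ℝ) * y⌋ = m := by
    rw [Int.floor_eq_iff]
    push_cast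
    constructor <;> linarith [hy.1, hy.2]
  rw [kappa, this, Int.cast_natCast]

lemma efun_intCast_div (n j : ℕ) (d : ℤ) :
    efun j (d / n) = Complex.exp (2 * π * Complex.I / n) ^ ((j : ℤ) * d) := by
  rw [efun, ← Complex.exp_int_mul]
  push_cast
  ring_nf

lemma conj_efun (j : ℕ) (x : ℝ) : conj (efun j x) = efun j (-x) := by
  rw [efun, efun, ← Complex.exp_conj]
  simp [map_ofNat]

lemma efun_add (j : ℕ) (x y : ℝ) : efun j (x + y) = efun j x * efun j y := by
  rw [efun, efun, efun, ← Complex.exp_add]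
  push_cast
  ring_nf

lemma Gsemi_kappa_eq_of_mem_Ioo {n m : ℕ} (hn : 0 < n) (t x : ℝ) {y : ℝ}
    (hy : y ∈ Ioo (m / n : ℝ) ((m + 1) / n)) :
    Gsemi n t (kappa n x) y = ∑ j ∈ range n, (rexp (lamn n j * t) : ℂ) *
      Complex.exp (2 * π * Complex.I / n) ^ ((j : ℤ) * (⌊(n : ℝ) * x⌋ - m)) := by
  refine sum_congr rfl fun j _ => ?_
  rw [efunInterp_kappa, kappa_eq_of_mem_Ioo hn hy, mul_assoc, conj_efun, ← efun_add, kappa,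
    ← sub_eq_add_neg, ← sub_div, ← efun_intCast_div]
  push_cast
  rfl

lemma intervalIntegral_zero_one_eq_sum_div_of_eqOn {n : ℕ} (hn : 0 < n) {f : ℝ → ℝ} (v : ℕ → ℝ)
    (hf : ∀ m < n, EqOn f (fun _ => v m) (Ioo (m / n : ℝ) ((m + 1) / n))) :
    ∫ y in (0 : ℝ)..1, f y = (∑ m ∈ range n, v m) / n := by
  have hn' : (0 : ℝ) < n := Nat.cast_pos.2 hn
  set a : ℕ → ℝ := fun k => k / n
  have hle : ∀ m, a m ≤ a (m + 1) := fun m => by simp only [a]; gcongr; simp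
  have hcell : ∀ m < n, EqOn f (fun _ => v m) (Ioo (a m) (a (m + 1))) := fun m hm => by
    simpa [a] using hf m hm
  have hint : ∀ m < n, IntervalIntegrable f volume (a m) (a (m + 1)) := fun m hm => by
    rw [intervalIntegrable_iff_integrableOn_Ioo_of_le (hle m)]
    exact (integrableOn_const measure_Ioo_lt_top.ne).congr_fun (hcell m hm).symm measurableSet_Ioo
  have hval : ∀ m < n, ∫ y in (a m)..(a (m + 1)), f y = v m / n := fun m hm => by
    rw [intervalIntegral.integral_of_le (hle m), integral_Ioc_eq_integral_Ioo,
      setIntegral_congr_fun measurableSet_Ioo (hcell m hm), setIntegral_const,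
      Real.volume_real_Ioo_of_le (hle m), smul_eq_mul]
    simp only [a]
    push_cast
    field_simp
    ring
  have hsplit := intervalIntegral.sum_integral_adjacent_intervals hint
  simp only [a, Nat.cast_zero, zero_div, div_self hn'.ne'] at hsplit
  rw [← hsplit, sum_div]
  exact sum_congr rfl fun m hm => hval m (mem_range.1 hm)

lemma integral_re_Gsemi_kappa_sq {n : ℕ} (hn : 0 < n) (t x : ℝ) :
    ∫ y in (0 : ℝ)..1, (Gsemi n t (kappa n x) y).re ^ 2 =
      ∑ j ∈ range n, rexp (2 * lamn n j * t) := by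
  have hζ := Complex.isPrimitiveRoot_exp n hn.ne'
  set ζ := Complex.exp (2 * π * Complex.I / n)
  set c : ℕ → ℝ := fun j => rexp (lamn n j * t)
  set p := ⌊(n : ℝ) * x⌋
  set S : ℕ → ℂ := fun m => ∑ j ∈ range n, (c j : ℂ) * ζ ^ ((j : ℤ) * (p - m))
  have hre : ∀ m, (S m).re ^ 2 = Complex.normSq (S m) := fun m => by
    have hreal : conj (S m) = S m :=
      conj_sum_mul_zpow_of_reflect hζ c (fun j hj => by simp only [c, lamn_sub hj]) _
    rw [Complex.normSq_apply, Complex.conj_eq_iff_im.1 hreal]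
    ring
  have hparseval : ∑ m ∈ range n, Complex.normSq (S m) = n * ∑ j ∈ range n, c j ^ 2 := by
    have hS : ∀ m, S m = ∑ j ∈ range n, ((c j : ℂ) * ζ ^ ((j : ℤ) * p)) * ζ⁻¹ ^ (j * m) := by
      intro m
      refine sum_congr rfl fun j _ => ?_
      rw [mul_assoc, mul_sub, zpow_sub₀ (hζ.ne_zero hn.ne'), div_eq_mul_inv, inv_pow,
        ← zpow_natCast]
      push_cast
      rfl
    simp_rw [hS, hζ.inv.sum_normSq_sum_mul_pow, map_mul, Complex.normSq_ofReal, map_zpow₀,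
      Complex.normSq_eq_norm_sq, hζ.norm'_eq_one hn.ne', one_pow, one_zpow, mul_one, sq]
  rw [intervalIntegral_zero_one_eq_sum_div_of_eqOn hn (fun m => (S m).re ^ 2)
    fun m _ y hy => by simp only [Gsemi_kappa_eq_of_mem_Ioo hn t x hy, S, c, ζ, p]]
  simp_rw [hre, hparseval]
  field_simp
  refine sum_congr rfl fun j _ => ?_
  rw [← Real.exp_nat_mul]
  ring_nf

theorem stmt10_general (n : ℕ) (hn : 3 ≤ n) (t x : ℝ) (ht : 0 < t) :
    ((1 - Real.exp (-2 * (n : ℝ) ^ 2 * π ^ 2 * t)) / Real.sqrt (32 * π * t) ≤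
      ∑ j ∈ Finset.range n, Real.exp (2 * lamn n j * t)) ∧
    (1 - Real.exp (-2 * (n : ℝ) ^ 2 * π ^ 2 * t)) / Real.sqrt (32 * π * t) ≤
      ∫ y in (0 : ℝ)..1, ((Gsemi n t (kappa n x) y).re) ^ 2 := by
  have hbound := one_sub_exp_div_sqrt_le_sum_exp_lamn n ht
  rw [integral_re_Gsemi_kappa_sq (by omega) t x]
  exact ⟨hbound, hbound⟩

theorem stmt10 (n : ℕ) (hn : 3 ≤ n) (t x : ℝ) (ht : 0 < t) (hx : x ∈ Set.Icc (0 : ℝ) 1) :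
    ((1 - Real.exp (-2 * (n : ℝ) ^ 2 * π ^ 2 * t)) / Real.sqrt (32 * π * t) ≤
      ∑ j ∈ Finset.range n, Real.exp (2 * lamn n j * t)) ∧
    (1 - Real.exp (-2 * (n : ℝ) ^ 2 * π ^ 2 * t)) / Real.sqrt (32 * π * t) ≤
      ∫ y in (0 : ℝ)..1, ((Gsemi n t (kappa n x) y).re) ^ 2 :=
  stmt10_general n hn t x ht
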